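/- arXiv:1108.3632 — 2 statements merged into one kernel-verified Lean document; each statement's English description precedes it below -/
import Mathlib

section
/- The language T^∞ of tangent words is factorial and extendable: every factor of a tangent word is tangent, and for every tangent word w there exist letters a, b ∈ {0,1} such that aw and wb are tangent. -/
/-! Diagonal words are the labels of paths in an automaton in which every state has both a
predecessor and a successor, so they form a factorial, extendable language. Both properties
lift through a desubstitution `w ↦ delRun c w`. Factors: `delRun c` is monotone for the factor
order, and a factor of `w` still avoids `!c !c`. Extensions: `delRun c w ++ [b]` is the
desubstitution of `w ++ [b]` if `w` ends in `c`, and of `w ++ [c, b]` otherwise (the new `c`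
closes a run and is deleted); symmetrically on the left. Induction along the chain of
desubstitutions gives the theorem. -/

/-- Helper for deleting one letter `c` from each maximal run of `c`s.
The flag is `true` when we are at the start of the word or just after a letter `≠ c`,
i.e. when the next occurrence of `c` starts a maximal run and must be deleted. -/
def delRunAux (c : Bool) : Bool → List Bool → List Bool
  | _, [] => []
  | del, a :: l =>
      if a = c then
        (if del then delRunAux c false l else a :: delRunAux c false l)
      else a :: delRunAux c true l

/-- Delete one letter `c` from each maximal run of `c`s in `w`. -/
def delRun (c : Bool) (w : List Bool) : List Bool := delRunAux c true w

/-- `Desub w v` : `v` is a desubstitution of the nonempty word `w`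
(letter `0` is `false`, letter `1` is `true`):
if `11` does not occur in `w` one may delete one `0` from each maximal run of `0`s,
and if `00` does not occur in `w` one may delete one `1` from each maximal run of `1`s. -/
def Desub (w v : List Bool) : Prop :=
  w ≠ [] ∧
    ((¬ [true, true] <:+: w ∧ v = delRun false w) ∨
     (¬ [false, false] <:+: w ∧ v = delRun true w))

/-- States of the three-state "diagonal" automaton. -/
inductive DiagState | Q | R | S
  deriving DecidableEq

/-- Transitions of the diagonal automaton:
Q→R on 0, R→Q on 1, R→S on 0, S→R on 1. -/
def diagStep : DiagState → Bool → Option DiagState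
  | .Q, false => some .R
  | .R, true  => some .Q
  | .R, false => some .S
  | .S, true  => some .R
  | _, _ => none

/-- States of the eight-state "non-oscillating diagonal" automaton. -/
inductive NOState | B | R | S | T | U | C | D | E
  deriving DecidableEq

/-- Transitions of the non-oscillating diagonal automaton:
B→R on 0, R→B on 1, R→S on 0, S→T on 1, T→S on 0, T→U on 1, U→E on 0, E→U on 1,
B→C on 1, C→D on 0, D→C on 1, D→E on 0. -/
def noStep : NOState → Bool → Option NOState
  | .B, false => some .R
  | .B, true  => some .C
  | .R, false => some .S
  | .R, true  => some .B
  | .S, true  => some .T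
  | .T, false => some .S
  | .T, true  => some .U
  | .U, false => some .E
  | .C, false => some .D
  | .D, false => some .E
  | .D, true  => some .C
  | .E, true  => some .U
  | _, _ => none

/-- The list of states visited when reading a word from state `q`
in a (partial deterministic) automaton, if the whole word can be read. -/
def autTraj {σ : Type} (step : σ → Bool → Option σ) : σ → List Bool → Option (List σ)
  | q, [] => some [q]
  | q, a :: l => (step q a).bind fun q' => (autTraj step q' l).map (q :: ·)

/-- A word is diagonal if it labels a path of the diagonal automaton
(all states are initial and accepting). -/
def Diagonal (w : List Bool) : Prop := ∃ q : DiagState, (autTraj diagStep q w).isSome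

/-- A word is non-oscillating diagonal if it labels a path of the non-oscillating
diagonal automaton (all states are initial and accepting). -/
def NonOscDiagonal (w : List Bool) : Prop := ∃ q : NOState, (autTraj noStep q w).isSome

/-- A word is tangent if some finite sequence of desubstitutions leads to a diagonal word. -/
def Tangent (w : List Bool) : Prop :=
  ∃ v, Relation.ReflTransGen Desub w v ∧ Diagonal v

/-- A word is tangent analytic if some finite sequence of desubstitutions leads to a
non-oscillating diagonal word. -/
def TangentAnalytic (w : List Bool) : Prop :=
  ∃ v, Relation.ReflTransGen Desub w v ∧ NonOscDiagonal v

/-- A word is `k`-balanced if any two factors of the same length have numbers of `1`s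
differing by at most `k`. -/
def BalancedWord (k : ℕ) (w : List Bool) : Prop :=
  ∀ u v : List Bool, u <:+: w → v <:+: w → u.length = v.length →
    |(u.count true : ℤ) - (v.count true : ℤ)| ≤ (k : ℤ)

/-- `pcount L n` is the complexity `p_n(L)`: the number of words of length `n` in `L`. -/
noncomputable def pcount (L : Set (List Bool)) (n : ℕ) : ℕ :=
  Set.ncard {w | w ∈ L ∧ w.length = n}

/-- The language `T^∞` of tangent words. -/
def Tinf : Set (List Bool) := {w | Tangent w}

/-- The language `T^ω` of tangent analytic words. -/
def Tomega : Set (List Bool) := {w | TangentAnalytic w}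

/-- A word `w ∈ L` is bispecial when `0w`, `1w`, `w0`, `w1` all belong to `L`. -/
def Bispecial (L : Set (List Bool)) (w : List Bool) : Prop :=
  w ∈ L ∧ (false :: w) ∈ L ∧ (true :: w) ∈ L ∧ (w ++ [false]) ∈ L ∧ (w ++ [true]) ∈ L

/-- The number of two-sided extensions `a·w·b` of `w` inside `L`. -/
noncomputable def extCount (L : Set (List Bool)) (w : List Bool) : ℕ :=
  Set.ncard {p : Bool × Bool | (p.1 :: (w ++ [p.2])) ∈ L}

/-- A weak bispecial word of `L`. -/
def WeakBispecial (L : Set (List Bool)) (w : List Bool) : Prop :=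
  Bispecial L w ∧ extCount L w = 2

/-- A strong bispecial word of `L`. -/
def StrongBispecial (L : Set (List Bool)) (w : List Bool) : Prop :=
  Bispecial L w ∧ extCount L w = 4

/-- `wb L n` : the number of weak bispecial words of length `n` in `L`. -/
noncomputable def wb (L : Set (List Bool)) (n : ℕ) : ℕ :=
  Set.ncard {w | WeakBispecial L w ∧ w.length = n}

/-- `sb L n` : the number of strong bispecial words of length `n` in `L`. -/
noncomputable def sb (L : Set (List Bool)) (n : ℕ) : ℕ :=
  Set.ncard {w | StrongBispecial L w ∧ w.length = n}

/-- A language is factorial if it is closed under taking factors. -/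
def FactorialLang (L : Set (List Bool)) : Prop :=
  ∀ w ∈ L, ∀ u : List Bool, u <:+: w → u ∈ L

/-- A language is extendable if every word extends on both sides within the language. -/
def ExtendableLang (L : Set (List Bool)) : Prop :=
  ∀ w ∈ L, (∃ a : Bool, (a :: w) ∈ L) ∧ (∃ b : Bool, (w ++ [b]) ∈ L)

section Automaton

variable {σ : Type} (step : σ → Bool → Option σ)

def autRun : σ → List Bool → Option σ
  | q, [] => some q
  | q, a :: l => (step q a).bind fun q' => autRun q' l

theorem isSome_autTraj_iff (q : σ) (w : List Bool) :
    (autTraj step q w).isSome ↔ (autRun step q w).isSome := by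
  induction w generalizing q with
  | nil => simp [autTraj, autRun]
  | cons a l ih => cases h : step q a <;> simp [autTraj, autRun, h, ih]

theorem isSome_autRun_append (q : σ) (u v : List Bool) :
    (autRun step q (u ++ v)).isSome ↔
      ∃ q', autRun step q u = some q' ∧ (autRun step q' v).isSome := by
  induction u generalizing q with
  | nil => simp [autRun]
  | cons a l ih => cases h : step q a <;> simp [autRun, h, ih]

variable {step}

theorem exists_isSome_autTraj_of_infix {u w : List Bool} (h : u <:+: w) {q : σ}
    (hw : (autTraj step q w).isSome) : ∃ q', (autTraj step q' u).isSome := by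
  obtain ⟨s, t, rfl⟩ := h
  rw [isSome_autTraj_iff, List.append_assoc, isSome_autRun_append] at hw
  obtain ⟨q₁, -, hut⟩ := hw
  obtain ⟨_, hu, -⟩ := (isSome_autRun_append step q₁ u t).1 hut
  exact ⟨q₁, by rw [isSome_autTraj_iff, hu]; rfl⟩

theorem exists_isSome_autTraj_cons (hpred : ∀ q, ∃ a p, step p a = some q) {w : List Bool}
    {q : σ} (hw : (autTraj step q w).isSome) : ∃ a p, (autTraj step p (a :: w)).isSome := by
  obtain ⟨a, p, hp⟩ := hpred q
  refine ⟨a, p, ?_⟩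
  rw [isSome_autTraj_iff] at hw ⊢
  simpa [autRun, hp] using hw

theorem exists_isSome_autTraj_append_singleton (hsucc : ∀ q, ∃ b q', step q b = some q')
    {w : List Bool} {q : σ} (hw : (autTraj step q w).isSome) :
    ∃ b, (autTraj step q (w ++ [b])).isSome := by
  rw [isSome_autTraj_iff, Option.isSome_iff_exists] at hw
  obtain ⟨q₁, hq₁⟩ := hw
  obtain ⟨b, q₂, hb⟩ := hsucc q₁
  refine ⟨b, ?_⟩
  rw [isSome_autTraj_iff, isSome_autRun_append]
  exact ⟨q₁, hq₁, by simp [autRun, hb]⟩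

end Automaton

theorem diagStep_exists_pred (q : DiagState) : ∃ a p, diagStep p a = some q := by
  cases q
  exacts [⟨true, .R, rfl⟩, ⟨false, .Q, rfl⟩, ⟨false, .R, rfl⟩]

theorem diagStep_exists_succ (q : DiagState) : ∃ b q', diagStep q b = some q' := by
  cases q
  exacts [⟨false, .R, rfl⟩, ⟨true, .Q, rfl⟩, ⟨true, .R, rfl⟩]

theorem diagonal_nil : Diagonal [] := ⟨.Q, rfl⟩

theorem Diagonal.of_infix {u w : List Bool} (hw : Diagonal w) (h : u <:+: w) : Diagonal u :=
  let ⟨_, hq⟩ := hw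
  exists_isSome_autTraj_of_infix h hq

theorem Diagonal.exists_cons {w : List Bool} (hw : Diagonal w) : ∃ a, Diagonal (a :: w) :=
  let ⟨_, hq⟩ := hw
  let ⟨a, p, hp⟩ := exists_isSome_autTraj_cons diagStep_exists_pred hq
  ⟨a, p, hp⟩

theorem Diagonal.exists_append_singleton {w : List Bool} (hw : Diagonal w) :
    ∃ b, Diagonal (w ++ [b]) :=
  let ⟨q, hq⟩ := hw
  let ⟨b, hb⟩ := exists_isSome_autTraj_append_singleton diagStep_exists_succ hq
  ⟨b, q, hb⟩

section DelRun

variable (c : Bool)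

def delRunFlag : Bool → List Bool → Bool
  | d, [] => d
  | _, a :: l => delRunFlag (a != c) l

theorem delRunAux_append (d : Bool) (u v : List Bool) :
    delRunAux c d (u ++ v) = delRunAux c d u ++ delRunAux c (delRunFlag c d u) v := by
  induction u generalizing d with
  | nil => rfl
  | cons a l ih =>
    by_cases h : a = c
    · subst h
      cases d <;> simp [delRunAux, delRunFlag, ih]
    · simp [delRunAux, delRunFlag, h, ih, bne_iff_ne.2 h]

theorem delRunFlag_append_singleton (d a : Bool) (u : List Bool) :
    delRunFlag c d (u ++ [a]) = (a != c) := by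
  induction u generalizing d with
  | nil => rfl
  | cons b l ih => exact ih _

theorem delRunAux_eq_of_head?_ne {u : List Bool} (h : u.head? ≠ some c) (d d' : Bool) :
    delRunAux c d u = delRunAux c d' u := by
  cases u with
  | nil => rfl
  | cons a l => simp_all [delRunAux]

theorem delRunAux_true_infix (d : Bool) (u : List Bool) :
    delRunAux c true u <:+: delRunAux c d u := by
  cases d with
  | true => exact List.infix_refl _
  | false =>
    cases u with
    | nil => exact List.infix_refl _
    | cons a l =>
      by_cases h : a = c
      · simpa [delRunAux, h] using List.infix_cons (List.infix_refl _)
      · simp [delRunAux, h]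

theorem delRun_infix {u w : List Bool} (h : u <:+: w) : delRun c u <:+: delRun c w := by
  obtain ⟨s, t, rfl⟩ := h
  rw [delRun, delRun, delRunAux_append, delRunAux_append]
  exact (delRunAux_true_infix c _ u).trans (List.infix_append _ _ _)

theorem delRun_cons_of_head? {u : List Bool} (h : u.head? = some c) (b : Bool) :
    delRun c (b :: u) = b :: delRun c u := by
  obtain ⟨l, rfl⟩ : ∃ l, u = c :: l := by
    cases u <;> simp_all
  cases b <;> cases c <;> simp [delRun, delRunAux]

theorem delRun_cons_self_of_head?_ne {u : List Bool} (h : u.head? ≠ some c) :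
    delRun c (c :: u) = delRun c u := by
  simpa [delRun, delRunAux] using delRunAux_eq_of_head?_ne c h false true

theorem delRun_append_singleton_of_getLast? {u : List Bool} (h : u.getLast? = some c) (b : Bool) :
    delRun c (u ++ [b]) = delRun c u ++ [b] := by
  obtain ⟨l, rfl⟩ := List.getLast?_eq_some_iff.1 h
  rw [delRun, delRunAux_append, delRunFlag_append_singleton]
  cases b <;> cases c <;> rfl

theorem delRun_append_self_of_getLast?_ne {u : List Bool} (h : u.getLast? ≠ some c) :
    delRun c (u ++ [c]) = delRun c u := by
  rw [delRun, delRunAux_append]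
  rcases List.eq_nil_or_concat u with rfl | ⟨l, a, rfl⟩
  · simp [delRunFlag, delRunAux, delRun]
  · have ha : a ≠ c := by simpa using h
    simp [delRunFlag_append_singleton, ha, delRunAux, delRun]

end DelRun

theorem not_pair_infix_cons {x a : Bool} {w : List Bool} (hw : ¬ [x, x] <:+: w)
    (h : a ≠ x ∨ w.head? ≠ some x) : ¬ [x, x] <:+: a :: w := by
  rw [List.infix_cons_iff]
  rintro (hp | hp)
  · cases w with
    | nil => simp at hp
    | cons b l =>
      obtain ⟨rfl, rfl⟩ : a = x ∧ b = x := by simpa [eq_comm] using hp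
      simp at h
  · exact hw hp

theorem not_pair_infix_append_singleton {x a : Bool} {w : List Bool} (hw : ¬ [x, x] <:+: w)
    (h : a ≠ x ∨ w.getLast? ≠ some x) : ¬ [x, x] <:+: w ++ [a] := by
  rw [← List.reverse_infix]
  simpa using not_pair_infix_cons (x := x) (a := a) (w := w.reverse)
    (fun hr => hw (by simpa using List.reverse_infix.2 hr)) (by simpa using h)

theorem desub_iff {w v : List Bool} :
    Desub w v ↔ w ≠ [] ∧ ∃ c, ¬ [!c, !c] <:+: w ∧ v = delRun c w := by
  simp [Desub, Bool.exists_bool, or_comm]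

theorem desub_delRun {c : Bool} {w : List Bool} (hw : w ≠ []) (hno : ¬ [!c, !c] <:+: w) :
    Desub w (delRun c w) :=
  desub_iff.2 ⟨hw, c, hno, rfl⟩

theorem exists_desub_append_singleton {c : Bool} {w : List Bool} (hno : ¬ [!c, !c] <:+: w)
    (b : Bool) : ∃ x s, Desub (w ++ x :: s) (delRun c w ++ [b]) := by
  have closed : ∀ u : List Bool, ¬ [!c, !c] <:+: u → u.getLast? = some c →
      Desub (u ++ [b]) (delRun c u ++ [b]) := fun u hu hlast => by
    rw [← delRun_append_singleton_of_getLast? c hlast]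
    exact desub_delRun (by simp) (not_pair_infix_append_singleton hu (Or.inr (by simp [hlast])))
  by_cases hlast : w.getLast? = some c
  · exact ⟨b, [], closed w hno hlast⟩
  · refine ⟨c, [b], ?_⟩
    have hc : ¬ [!c, !c] <:+: w ++ [c] := not_pair_infix_append_singleton hno (Or.inl (by simp))
    simpa [delRun_append_self_of_getLast?_ne c hlast] using closed (w ++ [c]) hc (by simp)

theorem exists_desub_cons {c : Bool} {w : List Bool} (hno : ¬ [!c, !c] <:+: w) (b : Bool) :
    ∃ s x, Desub (s ++ x :: w) (b :: delRun c w) := by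
  have opened : ∀ u : List Bool, ¬ [!c, !c] <:+: u → u.head? = some c →
      Desub (b :: u) (b :: delRun c u) := fun u hu hhead => by
    rw [← delRun_cons_of_head? c hhead]
    exact desub_delRun (by simp) (not_pair_infix_cons hu (Or.inr (by simp [hhead])))
  by_cases hhead : w.head? = some c
  · exact ⟨[], b, opened w hno hhead⟩
  · refine ⟨[b], c, ?_⟩
    have hc : ¬ [!c, !c] <:+: c :: w := not_pair_infix_cons hno (Or.inl (by simp))
    simpa [delRun_cons_self_of_head?_ne c hhead] using opened (c :: w) hc rfl

theorem Tangent.of_desub {w v : List Bool} (h : Desub w v) (hv : Tangent v) : Tangent w :=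
  let ⟨u, hvu, hu⟩ := hv
  ⟨u, .head h hvu, hu⟩

theorem Diagonal.tangent {w : List Bool} (hw : Diagonal w) : Tangent w := ⟨w, .refl, hw⟩

@[elab_as_elim]
theorem Tangent.induction_on {P : List Bool → Prop} {w : List Bool} (hw : Tangent w)
    (diagonal : ∀ w, Diagonal w → P w)
    (desub : ∀ c w, ¬ [!c, !c] <:+: w → P (delRun c w) → P w) : P w := by
  obtain ⟨v, hwv, hv⟩ := hw
  induction hwv using Relation.ReflTransGen.head_induction_on with
  | refl => exact diagonal v hv
  | head hstep _ ih =>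
    obtain ⟨-, c, hno, rfl⟩ := desub_iff.1 hstep
    exact desub c _ hno ih

theorem Tangent.of_infix {u w : List Bool} (hw : Tangent w) (h : u <:+: w) : Tangent u := by
  refine hw.induction_on (P := fun w => ∀ u, u <:+: w → Tangent u)
    (fun w hw u h => (hw.of_infix h).tangent) (fun c w hno ih u h => ?_) u h
  rcases eq_or_ne u [] with rfl | hu
  · exact diagonal_nil.tangent
  · exact .of_desub (desub_delRun hu fun hp => hno (hp.trans h)) (ih _ (delRun_infix c h))

theorem Tangent.exists_cons {w : List Bool} (hw : Tangent w) : ∃ a, Tangent (a :: w) := by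
  refine hw.induction_on (fun w hw => ?_) fun c w hno ih => ?_
  · obtain ⟨a, ha⟩ := hw.exists_cons
    exact ⟨a, ha.tangent⟩
  · obtain ⟨b, hb⟩ := ih
    obtain ⟨s, x, hd⟩ := exists_desub_cons hno b
    exact ⟨x, (hb.of_desub hd).of_infix ⟨s, [], by simp⟩⟩

theorem Tangent.exists_append_singleton {w : List Bool} (hw : Tangent w) :
    ∃ b, Tangent (w ++ [b]) := by
  refine hw.induction_on (fun w hw => ?_) fun c w hno ih => ?_
  · obtain ⟨b, hb⟩ := hw.exists_append_singleton
    exact ⟨b, hb.tangent⟩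
  · obtain ⟨b, hb⟩ := ih
    obtain ⟨x, s, hd⟩ := exists_desub_append_singleton hno b
    exact ⟨x, (hb.of_desub hd).of_infix ⟨[], s, by simp⟩⟩

/-- `T^∞` is factorial and extendable. -/
theorem tangent_factorial_extendable :
    (∀ w, Tangent w → ∀ u : List Bool, u <:+: w → Tangent u) ∧
    (∀ w, Tangent w → ∃ a b : Bool, Tangent (a :: w) ∧ Tangent (w ++ [b])) := by
  refine ⟨fun w hw u h => hw.of_infix h, fun w hw => ?_⟩
  obtain ⟨a, ha⟩ := hw.exists_cons
  obtain ⟨b, hb⟩ := hw.exists_append_singleton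
  exact ⟨a, b, ha, hb⟩
end

section
/- A binary word w is 1-balanced if and only if there is a finite sequence w = w_0, w_1, …, w_k in which each w_{i+1} is a desubstitution of w_i and w_k is the empty word. -/
/-! A word is 1-balanced iff no word `z` has both `0z0` and `1z1` as factors. When `w` avoids
`11`, every such `z` is `0σ(y)` for the substitution `σ = subst10 : 0 ↦ 0, 1 ↦ 10`, and `0z0`,
`1z1` are factors of `w` exactly when `0y0`, `1y1` are factors of the desubstitution of `w`.
So deleting `0`s preserves and reflects 1-balancedness, and exchanging the letters handles words
avoiding `00`. A nonempty 1-balanced word avoids `00` or `11`, hence has a strictly shorter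
desubstitution, and induction on the length concludes. -/

@[simp] lemma delRunAux_false_cons_true (d : Bool) (l : List Bool) :
    delRunAux false d (true :: l) = true :: delRunAux false true l := rfl

@[simp] lemma delRunAux_false_true_cons_false (l : List Bool) :
    delRunAux false true (false :: l) = delRunAux false false l := rfl

@[simp] lemma delRunAux_false_false_cons_false (l : List Bool) :
    delRunAux false false (false :: l) = false :: delRunAux false false l := rfl

lemma delRunAux_append_s9 (d : Bool) (l₁ l₂ : List Bool) :
    delRunAux false d (l₁ ++ l₂) =
      delRunAux false d l₁ ++ delRunAux false (l₁.getLastD d) l₂ := by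
  induction l₁ generalizing d with
  | nil => rfl
  | cons a l ih =>
    rw [List.cons_append, List.getLastD_cons]
    cases a <;> cases d <;> simp [ih]

lemma length_delRunAux_le (c d : Bool) (l : List Bool) :
    (delRunAux c d l).length ≤ l.length := by
  induction l generalizing d with
  | nil => rfl
  | cons a l ih =>
    simp only [delRunAux]
    split_ifs <;> grind

lemma length_delRun_lt {c : Bool} {l : List Bool} (h : c ∈ l) :
    (delRun c l).length < l.length := by
  induction l with
  | nil => simp at h
  | cons a l ih =>
    simp only [delRun, delRunAux] at ih ⊢
    split_ifs with hac
    · exact Nat.lt_succ_of_le (length_delRunAux_le c false l)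
    · simpa using ih (by simpa [Ne.symm hac] using h)

lemma delRunAux_true_eq_map_not (d : Bool) (l : List Bool) :
    delRunAux true d l = (delRunAux false d (l.map not)).map not := by
  induction l generalizing d with
  | nil => rfl
  | cons a l ih => cases a <;> cases d <;> simp [delRunAux, ih]

lemma BalancedWord.map_not {k : ℕ} {w : List Bool} (h : BalancedWord k w) :
    BalancedWord k (w.map not) := by
  intro u v hu hv hl
  have hcount : ∀ x : List Bool, ((x.map not).count true : ℤ) = x.length - x.count true := by
    intro x
    induction x with
    | nil => rfl
    | cons a x ih =>
      cases a <;> simp [ih]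
      ring
  have := h (u.map not) (v.map not) (by simpa [Function.comp_def] using hu.map not)
    (by simpa [Function.comp_def] using hv.map not)
    (by simpa using hl)
  rwa [hcount, hcount, hl, sub_sub_sub_cancel_left, abs_sub_comm] at this

lemma balancedWord_map_not_iff {k : ℕ} {w : List Bool} :
    BalancedWord k (w.map not) ↔ BalancedWord k w :=
  ⟨fun h => by simpa [Function.comp_def] using h.map_not, BalancedWord.map_not⟩

lemma balancedWord_nil (k : ℕ) : BalancedWord k [] := by
  intro u v hu hv _
  simp [List.infix_nil.1 hu, List.infix_nil.1 hv]

lemma List.exists_eq_append_cons_of_ne {α : Type*} {u v : List α} (hl : u.length = v.length)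
    (hne : u ≠ v) : ∃ p x y s t, x ≠ y ∧ u = p ++ x :: s ∧ v = p ++ y :: t ∧
      s.length = t.length := by
  induction u generalizing v with
  | nil => exact absurd (List.eq_nil_of_length_eq_zero hl.symm).symm hne
  | cons a u ih =>
    obtain _ | ⟨b, v⟩ := v
    · simp at hl
    simp only [List.length_cons, Nat.add_right_cancel_iff] at hl
    by_cases hab : a = b
    · subst hab
      obtain ⟨p, x, y, s, t, hxy, rfl, rfl, hst⟩ := ih hl (by simpa using hne)
      exact ⟨a :: p, x, y, s, t, hxy, rfl, rfl, hst⟩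
    · exact ⟨[], a, b, u, v, hab, rfl, rfl, hl⟩

lemma exists_infix_of_count_add_two_le {u v : List Bool} (hl : u.length = v.length)
    (hc : v.count true + 2 ≤ u.count true) :
    ∃ z, true :: z ++ [true] <:+: u ∧ false :: z ++ [false] <:+: v := by
  induction h : u.length using Nat.strong_induction_on generalizing u v with
  | _ n ih =>
    obtain _ | ⟨a, u⟩ := u
    · simp at hc
    obtain _ | ⟨b, v⟩ := v
    · simp at hl
    simp only [List.length_cons, Nat.add_right_cancel_iff] at hl h
    have recurse : ∀ s t : List Bool, s <:+: u → t <:+: v → s.length = t.length →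
        t.count true + 2 ≤ s.count true →
        ∃ z, true :: z ++ [true] <:+: a :: u ∧ false :: z ++ [false] <:+: b :: v := by
      intro s t hs ht hst hc'
      obtain ⟨z, hz₁, hz₀⟩ := ih s.length (h ▸ Nat.lt_succ_of_le hs.length_le) hst hc' rfl
      exact ⟨z, (hz₁.trans hs).trans (List.suffix_cons a u).isInfix,
        (hz₀.trans ht).trans (List.suffix_cons b v).isInfix⟩
    match a, b with
    | true, true | false, false | false, true =>
      exact recurse u v (List.infix_refl u) (List.infix_refl v) hl (by simp at hc; omega)
    | true, false =>
      by_cases huv : u = v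
      · subst huv; simp at hc
      obtain ⟨p, x, y, s, t, hxy, rfl, rfl, hst⟩ := List.exists_eq_append_cons_of_ne hl huv
      match x, y, hxy with
      | true, false, _ => exact ⟨p, ⟨[], s, by simp⟩, ⟨[], t, by simp⟩⟩
      | false, true, _ =>
        exact recurse s t ⟨p ++ [false], [], by simp⟩ ⟨p ++ [true], [], by simp⟩ hst
          (by simp at hc; omega)

lemma balancedWord_one_iff_forall_not_infix {w : List Bool} : BalancedWord 1 w ↔
    ∀ z, ¬(false :: z ++ [false] <:+: w ∧ true :: z ++ [true] <:+: w) := by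
  constructor
  · rintro hb z ⟨h₀, h₁⟩
    have := abs_le.1 (hb _ _ h₀ h₁ (by simp))
    simp at this
  · intro h u v hu hv hl
    refine abs_le.2 ⟨?_, ?_⟩ <;> by_contra! hc
    · obtain ⟨z, hz₁, hz₀⟩ := exists_infix_of_count_add_two_le hl.symm (by omega)
      exact h z ⟨hz₀.trans hu, hz₁.trans hv⟩
    · obtain ⟨z, hz₁, hz₀⟩ := exists_infix_of_count_add_two_le hl (by omega)
      exact h z ⟨hz₀.trans hv, hz₁.trans hu⟩

def subst10 : List Bool → List Bool
  | [] => []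
  | false :: y => false :: subst10 y
  | true :: y => true :: false :: subst10 y

lemma delRunAux_false_subst10_append (y r : List Bool) :
    delRunAux false false (subst10 y ++ r) = y ++ delRunAux false false r := by
  induction y with
  | nil => rfl
  | cons a y ih => cases a <;> simp [subst10, ih]

lemma subst10_delRunAux_false :
    ∀ {u : List Bool}, ¬[true, true] <:+: u ++ [true] → subst10 (delRunAux false false u) = u
  | [], _ => rfl
  | false :: u, h => by
    simpa [subst10] using
      subst10_delRunAux_false fun h' => h (h'.trans (List.suffix_cons _ _).isInfix)
  | [true], h => absurd (List.infix_refl _) h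
  | true :: true :: u, h => absurd ⟨[], u ++ [true], rfl⟩ h
  | true :: false :: u, h => by
    simpa [subst10] using
      subst10_delRunAux_false fun h' => h (h'.trans ⟨[true, false], [], by simp⟩)

lemma eq_false_cons_subst10_delRun {p : List Bool}
    (h : ¬[true, true] <:+: true :: p ++ [true]) :
    p = false :: subst10 (delRun false p) := by
  match p, h with
  | [], h => exact absurd (List.infix_refl _) h
  | true :: p, h => exact absurd ⟨[], p ++ [true], rfl⟩ h
  | false :: p, h =>
    simpa [delRun] using
      (subst10_delRunAux_false (fun h' => h (h'.trans ⟨[true, false], [], by simp⟩))).symm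

lemma delRunAux_eq_append_true_cons {d : Bool} {w a r : List Bool}
    (h : delRunAux false d w = a ++ true :: r) :
    ∃ x x', w = x ++ true :: x' ∧ delRunAux false d x = a ∧ delRunAux false true x' = r := by
  induction w generalizing d a with
  | nil => simp [delRunAux] at h
  | cons b w ih =>
    match b, d, a with
    | true, _, [] => exact ⟨[], w, rfl, rfl, by simpa using h⟩
    | true, _, c :: a =>
      simp only [delRunAux_false_cons_true, List.cons_append, List.cons.injEq] at h
      obtain ⟨rfl, h⟩ := h
      obtain ⟨x, x', rfl, hx, hx'⟩ := ih h
      exact ⟨true :: x, x', rfl, by simp [hx], hx'⟩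
    | false, true, a =>
      obtain ⟨x, x', rfl, hx, hx'⟩ := ih (by simpa using h)
      exact ⟨false :: x, x', rfl, by simpa using hx, hx'⟩
    | false, false, [] => simp at h
    | false, false, c :: a =>
      simp only [delRunAux_false_false_cons_false, List.cons_append, List.cons.injEq] at h
      obtain ⟨rfl, h⟩ := h
      obtain ⟨x, x', rfl, hx, hx'⟩ := ih h
      exact ⟨false :: x, x', rfl, by simp [hx], hx'⟩

lemma delRunAux_eq_append_false_cons {d : Bool} {w a r : List Bool}
    (h : delRunAux false d w = a ++ false :: r) :
    ∃ x x', w = x ++ false :: x' ∧ x.getLastD d = false ∧ delRunAux false d x = a ∧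
      delRunAux false false x' = r := by
  induction w generalizing d a with
  | nil => simp [delRunAux] at h
  | cons b w ih =>
    match b, d, a with
    | true, _, [] => simp at h
    | true, _, c :: a =>
      simp only [delRunAux_false_cons_true, List.cons_append, List.cons.injEq] at h
      obtain ⟨rfl, h⟩ := h
      obtain ⟨x, x', rfl, hlast, hx, hx'⟩ := ih h
      exact ⟨true :: x, x', rfl, by rwa [List.getLastD_cons], by simp [hx], hx'⟩
    | false, true, a =>
      obtain ⟨x, x', rfl, hlast, hx, hx'⟩ := ih (by simpa using h)
      exact ⟨false :: x, x', rfl, by rwa [List.getLastD_cons], by simpa using hx, hx'⟩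
    | false, false, [] => exact ⟨[], w, rfl, rfl, rfl, by simpa using h⟩
    | false, false, c :: a =>
      simp only [delRunAux_false_false_cons_false, List.cons_append, List.cons.injEq] at h
      obtain ⟨rfl, h⟩ := h
      obtain ⟨x, x', rfl, hlast, hx, hx'⟩ := ih h
      exact ⟨false :: x, x', rfl, by rwa [List.getLastD_cons], by simp [hx], hx'⟩

lemma not_infix_append_true {u : List Bool} (h : ¬[true, true] <:+: u)
    (hu : u.getLastD false = false) : ¬[true, true] <:+: u ++ [true] := by
  rw [List.infix_concat_iff, List.suffix_concat_iff]
  rintro ((h' | ⟨t, ht, ⟨s, rfl⟩⟩) | h')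
  · simp at h'
  · obtain rfl : t = [true] :=
      List.append_cancel_right (ht.symm : t ++ [true] = [true] ++ [true])
    simp at hu
  · exact h h'

lemma infix_delRun_false_iff_ones {w y : List Bool} (hw : ¬[true, true] <:+: w) :
    true :: y ++ [true] <:+: delRun false w ↔
      true :: (false :: subst10 y) ++ [true] <:+: w := by
  constructor
  · rintro ⟨s, t, hst⟩
    obtain ⟨x, x', rfl, -, hx'⟩ :=
      delRunAux_eq_append_true_cons (d := true) (a := s) (r := y ++ true :: t)
        (by simpa [delRun] using hst.symm)
    obtain ⟨p, p', rfl, hp, -⟩ := delRunAux_eq_append_true_cons hx'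
    have hpw : true :: p ++ [true] <:+: x ++ true :: (p ++ true :: p') := ⟨x, p', by simp⟩
    rw [← hp, ← delRun, ← eq_false_cons_subst10_delRun (fun h => hw (h.trans hpw))]
    exact hpw
  · rintro ⟨s, t, rfl⟩
    refine ⟨delRunAux false true s, delRunAux false true t, ?_⟩
    rw [delRun, List.append_assoc s, delRunAux_append_s9 _ s]
    simp [delRunAux_false_subst10_append]

lemma infix_delRun_false_iff_zeros {w y : List Bool} (hw : ¬[true, true] <:+: w) :
    false :: y ++ [false] <:+: delRun false w ↔
      false :: (false :: subst10 y) ++ [false] <:+: w := by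
  constructor
  · rintro ⟨s, t, hst⟩
    obtain ⟨x, x', rfl, hx, -, hx'⟩ := delRunAux_eq_append_false_cons (d := true) (a := s)
      (r := y ++ false :: t) (by simpa [delRun] using hst.symm)
    obtain ⟨p, p', rfl, hp, hpy, -⟩ := delRunAux_eq_append_false_cons hx'
    obtain ⟨x₀, rfl⟩ : ∃ x₀, x = x₀ ++ [false] := by
      rcases List.eq_nil_or_concat x with rfl | ⟨x₀, b, rfl⟩
      · simp at hx
      · rw [List.concat_eq_append, List.getLastD_concat] at hx
        exact ⟨x₀, by rw [List.concat_eq_append, hx]⟩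
    have hpw : p <:+: x₀ ++ [false] ++ false :: (p ++ false :: p') :=
      ⟨x₀ ++ [false, false], false :: p', by simp⟩
    rw [← hpy, subst10_delRunAux_false (not_infix_append_true (fun h => hw (h.trans hpw)) hp)]
    exact ⟨x₀, p', by simp⟩
  · rintro ⟨s, t, rfl⟩
    rw [delRun, List.append_assoc s, delRunAux_append_s9 _ s]
    cases s.getLastD true
    · exact ⟨delRunAux false true s ++ [false], delRunAux false false t, by
        simp [delRunAux_false_subst10_append]⟩
    · exact ⟨delRunAux false true s, delRunAux false false t, by
        simp [delRunAux_false_subst10_append]⟩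

theorem balancedWord_one_delRun_false_iff {w : List Bool} (hw : ¬[true, true] <:+: w) :
    BalancedWord 1 (delRun false w) ↔ BalancedWord 1 w := by
  simp only [balancedWord_one_iff_forall_not_infix, infix_delRun_false_iff_zeros hw,
    infix_delRun_false_iff_ones hw]
  refine ⟨fun h z ⟨h₀, h₁⟩ => ?_, fun h y => h _⟩
  rw [eq_false_cons_subst10_delRun (fun h₁₁ => hw (h₁₁.trans h₁))] at h₀ h₁
  exact h _ ⟨h₀, h₁⟩

theorem balancedWord_one_delRun_true_iff {w : List Bool} (hw : ¬[false, false] <:+: w) :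
    BalancedWord 1 (delRun true w) ↔ BalancedWord 1 w := by
  have hw' : ¬[true, true] <:+: w.map not := fun h =>
    hw (by simpa [Function.comp_def] using h.map not)
  rw [delRun, delRunAux_true_eq_map_not, balancedWord_map_not_iff, ← delRun,
    balancedWord_one_delRun_false_iff hw', balancedWord_map_not_iff]

theorem Desub.balancedWord_one_iff {w v : List Bool} (h : Desub w v) :
    BalancedWord 1 w ↔ BalancedWord 1 v := by
  obtain ⟨-, ⟨hw, rfl⟩ | ⟨hw, rfl⟩⟩ := h
  exacts [(balancedWord_one_delRun_false_iff hw).symm,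
    (balancedWord_one_delRun_true_iff hw).symm]

theorem exists_desub_length_lt {w : List Bool} (hne : w ≠ []) (hb : BalancedWord 1 w) :
    ∃ v, Desub w v ∧ v.length < w.length := by
  by_cases h : false ∈ w ∧ ¬[true, true] <:+: w
  · exact ⟨_, ⟨hne, Or.inl ⟨h.2, rfl⟩⟩, length_delRun_lt h.1⟩
  have h₀₀ : ¬[false, false] <:+: w := fun h₀₀ =>
    have h₁₁ : [true, true] <:+: w :=
      not_not.1 fun h₁₁ => h ⟨h₀₀.subset (by simp), h₁₁⟩
    balancedWord_one_iff_forall_not_infix.1 hb [] ⟨h₀₀, h₁₁⟩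
  have h₁ : true ∈ w := by
    obtain ⟨a, ha⟩ := List.exists_mem_of_ne_nil w hne
    cases a
    · by_contra ht
      exact h ⟨ha, fun h₁₁ => ht (h₁₁.subset (by simp))⟩
    · exact ha
  exact ⟨_, ⟨hne, Or.inr ⟨h₀₀, rfl⟩⟩, length_delRun_lt h₁⟩

/-- a word is 1-balanced iff a finite sequence of desubstitutions
leads from it to the empty word. -/
theorem balanced_iff_desub_to_empty (w : List Bool) :
    BalancedWord 1 w ↔ Relation.ReflTransGen Desub w [] := by
  constructor
  · induction h : w.length using Nat.strong_induction_on generalizing w with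
    | _ n ih =>
      intro hb
      rcases eq_or_ne w [] with rfl | hne
      · exact .refl
      obtain ⟨v, hv, hlt⟩ := exists_desub_length_lt hne hb
      exact .head hv (ih _ (h ▸ hlt) v rfl (hv.balancedWord_one_iff.1 hb))
  · intro h
    induction h using Relation.ReflTransGen.head_induction_on with
    | refl => exact balancedWord_nil 1
    | head hwv _ ih => exact hwv.balancedWord_one_iff.2 ih
end
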